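/- The minimum size of a locally nonforesty graph of order 6 is 11. -/

import Mathlib

/-!
Every neighbourhood contains a cycle, so every vertex has degree at least 3 and the
neighbourhood of every vertex spans at least 3 edges. If all degrees are at least 4 there are
at least 12 edges. Otherwise take `v` of degree 3 and let `x, y` be the two vertices outside
`N[v]`: the edges at `v`, the edges inside `N(v)` and the edges at `x` or `y` are pairwise
disjoint, and there are at least `3`, `3` and `3 + 3 - 1` of them. The join of `K₂` and `2K₂`
has 11 edges and every neighbourhood in it contains a triangle.
-/

open SimpleGraph

def LocallyNonforesty {V : Type*} (G : SimpleGraph V) : Prop :=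
  ∀ v : V, ¬ (G.induce (G.neighborSet v)).IsAcyclic

def ThreeConnected {V : Type*} [Fintype V] (G : SimpleGraph V) : Prop :=
  4 ≤ Fintype.card V ∧ ∀ S : Finset V, S.card ≤ 2 → (G.induce ((↑S : Set V)ᶜ)).Connected

open Finset

namespace SimpleGraph

variable {V : Type*} {G : SimpleGraph V}

lemma three_le_card_of_not_isAcyclic [Fintype V] (h : ¬ G.IsAcyclic) : 3 ≤ Fintype.card V := by
  by_contra! hlt
  exact h (.of_card_le_two (by rw [ENat.card_eq_coe_fintype_card]; norm_cast; omega))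

lemma three_le_card_edgeFinset_of_not_isAcyclic [Fintype G.edgeSet] (h : ¬ G.IsAcyclic) :
    3 ≤ #G.edgeFinset := by
  classical
  obtain ⟨v, c, hc⟩ : ∃ v, ∃ c : G.Walk v v, c.IsCycle := by simpa [IsAcyclic] using h
  calc 3 ≤ c.length := hc.three_le_length
    _ = #c.edges.toFinset := by rw [List.toFinset_card_of_nodup hc.edges_nodup, c.length_edges]
    _ ≤ #G.edgeFinset := card_le_card fun e he ↦
        mem_edgeFinset.mpr (c.edges_subset_edgeSet (List.mem_toFinset.mp he))

variable [Fintype V] [DecidableEq V] [DecidableRel G.Adj]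

lemma degree_add_card_add_degree_add_degree_le {v x y : V} (hxv : x ≠ v) (hyv : y ≠ v)
    (hxy : x ≠ y) (hvx : ¬ G.Adj v x) (hvy : ¬ G.Adj v y) :
    G.degree v + #{e ∈ G.edgeFinset | ∀ u ∈ e, G.Adj v u} + G.degree x + G.degree y ≤
      #G.edgeFinset + 1 := by
  simp only [← card_incidenceFinset_eq_degree]
  have hinter : #(G.incidenceFinset x ∩ G.incidenceFinset y) ≤ 1 := by
    refine card_le_one.mpr fun e he f hf ↦ ?_
    simp only [mem_inter, mem_incidenceFinset] at he hf
    rw [G.incidenceSet_inter_incidenceSet_subset hxy he,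
      G.incidenceSet_inter_incidenceSet_subset hxy hf]
  have hunion := card_union_add_card_inter (G.incidenceFinset x) (G.incidenceFinset y)
  set A := G.incidenceFinset v
  set B := {e ∈ G.edgeFinset | ∀ u ∈ e, G.Adj v u}
  set D := G.incidenceFinset x ∪ G.incidenceFinset y
  have hAB : Disjoint A B := by
    refine Finset.disjoint_left.mpr fun {e} heA heB ↦ ?_
    rw [mem_incidenceFinset] at heA
    exact ((mem_filter.mp heB).2 v heA.2).ne rfl
  have hD : ∀ w ≠ v, ¬ G.Adj v w → ∀ e ∈ G.incidenceFinset w, e ∉ A ∪ B := by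
    intro w hwv hvw e hew heAB
    rw [mem_incidenceFinset] at hew
    rcases mem_union.mp heAB with heA | heB
    · rw [mem_incidenceFinset] at heA
      exact hvw (G.adj_of_mem_incidenceSet hwv.symm heA hew)
    · exact hvw ((mem_filter.mp heB).2 w hew.2)
  have hABD : Disjoint (A ∪ B) D := Finset.disjoint_right.mpr fun {e} heD ↦ by
    rcases mem_union.mp heD with hex | hey
    · exact hD x hxv hvx e hex
    · exact hD y hyv hvy e hey
  have hsub : A ∪ B ∪ D ⊆ G.edgeFinset :=
    union_subset (union_subset (G.incidenceFinset_subset v) (filter_subset _ _))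
      (union_subset (G.incidenceFinset_subset x) (G.incidenceFinset_subset y))
  have := card_le_card hsub
  rw [card_union_of_disjoint hABD, card_union_of_disjoint hAB] at this
  omega

end SimpleGraph

section LocallyNonforesty

variable {V : Type*} {G : SimpleGraph V}

lemma LocallyNonforesty.of_forall_exists_triangle
    (h : ∀ v, ∃ a b c, G.Adj v a ∧ G.Adj v b ∧ G.Adj v c ∧ G.Adj a b ∧ G.Adj a c ∧ G.Adj b c) :
    LocallyNonforesty G := by
  intro v hacyc
  obtain ⟨a, b, c, hva, hvb, hvc, hab, hac, hbc⟩ := h v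
  classical
  exact hacyc.cliqueFree le_rfl _ (is3Clique_triple_iff (G := G.induce (G.neighborSet v))
    (a := ⟨a, hva⟩) (b := ⟨b, hvb⟩) (c := ⟨c, hvc⟩) |>.mpr ⟨hab, hac, hbc⟩)

variable [Fintype V] [DecidableRel G.Adj]

lemma LocallyNonforesty.three_le_degree (hG : LocallyNonforesty G) (v : V) :
    3 ≤ G.degree v := by
  rw [← card_neighborSet_eq_degree]
  exact three_le_card_of_not_isAcyclic (hG v)

lemma LocallyNonforesty.three_le_card_edges_within_neighborSet [DecidableEq V]
    (hG : LocallyNonforesty G) (v : V) :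
    3 ≤ #{e ∈ G.edgeFinset | ∀ u ∈ e, G.Adj v u} := by
  refine (three_le_card_edgeFinset_of_not_isAcyclic (hG v)).trans <|
    card_le_card_of_injOn (Sym2.map Subtype.val) ?_
      (Sym2.map.injective Subtype.val_injective).injOn
  intro e he
  induction e using Sym2.ind with
  | h a b =>
    simp only [coe_filter, Set.mem_ofPred_eq, mem_edgeFinset, Sym2.map_mk, mem_edgeSet,
      Sym2.mem_iff, forall_eq_or_imp, forall_eq]
    exact ⟨by simpa using he, a.2, b.2⟩

lemma LocallyNonforesty.eleven_le_card_edgeFinset [DecidableEq V] (hV : Fintype.card V = 6)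
    (hG : LocallyNonforesty G) : 11 ≤ #G.edgeFinset := by
  by_cases hdeg : ∀ v, 4 ≤ G.degree v
  · have hsum : 6 * 4 ≤ ∑ v, G.degree v :=
      calc 6 * 4 = ∑ _ : V, 4 := by simp [hV]
        _ ≤ ∑ v, G.degree v := sum_le_sum fun v _ ↦ hdeg v
    have := G.sum_degrees_eq_twice_card_edges
    omega
  push Not at hdeg
  obtain ⟨v, hv⟩ := hdeg
  have hv3 : G.degree v = 3 := le_antisymm (by omega) (hG.three_le_degree v)
  obtain ⟨x, y, hxy, hC⟩ : ∃ x y, x ≠ y ∧ (insert v (G.neighborFinset v))ᶜ = {x, y} := by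
    rw [← card_eq_two, card_compl, card_insert_of_notMem (by simp),
      card_neighborFinset_eq_degree]
    omega
  have hx : x ∈ (insert v (G.neighborFinset v))ᶜ := by simp [hC]
  have hy : y ∈ (insert v (G.neighborFinset v))ᶜ := by simp [hC]
  simp only [mem_compl, mem_insert, mem_neighborFinset, not_or] at hx hy
  have := G.degree_add_card_add_degree_add_degree_le hx.1 hy.1 hxy hx.2 hy.2
  have := hG.three_le_card_edges_within_neighborSet v
  have := hG.three_le_degree x
  have := hG.three_le_degree y
  omega

end LocallyNonforesty

/-- The join of `K₂` on `{0, 1}` with `2K₂` on `{2, 3}, {4, 5}`. -/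
def joinK2TwoK2 : SimpleGraph (Fin 6) where
  Adj i j := i ≠ j ∧ (i.val < 2 ∨ j.val < 2 ∨ i.val / 2 = j.val / 2)
  symm := ⟨fun _ _ h ↦ ⟨h.1.symm, by omega⟩⟩
  loopless := ⟨fun _ h ↦ h.1 rfl⟩

instance : DecidableRel joinK2TwoK2.Adj := fun i j ↦
  inferInstanceAs (Decidable (i ≠ j ∧ (i.val < 2 ∨ j.val < 2 ∨ i.val / 2 = j.val / 2)))

lemma locallyNonforesty_joinK2TwoK2 : LocallyNonforesty joinK2TwoK2 :=
  .of_forall_exists_triangle (by decide)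

lemma card_edgeFinset_joinK2TwoK2 : #joinK2TwoK2.edgeFinset = 11 := by decide

theorem stmt7 :
    IsLeast {m : ℕ | ∃ G : SimpleGraph (Fin 6),
      LocallyNonforesty G ∧ G.edgeSet.ncard = m} 11 := by
  refine ⟨⟨joinK2TwoK2, locallyNonforesty_joinK2TwoK2, ?_⟩, ?_⟩
  · rw [← coe_edgeFinset, Set.ncard_coe_finset, card_edgeFinset_joinK2TwoK2]
  · rintro m ⟨G, hG, rfl⟩
    classical
    rw [← coe_edgeFinset, Set.ncard_coe_finset]
    exact hG.eleven_le_card_edgeFinset (Fintype.card_fin 6)
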